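/- Assume B_R is centered at the origin and φ(0,0,η) = 0 for all η. Fix (x,t) ∈ B_R, a dyadic σ ∈ [R^{-1/2},1], and an arc τ ⊂ S¹ of aperture σ^{-1}R^{-1/2}. Then for any two R^{-1/2}-caps θ₁, θ₂ ⊂ τ, u^λ_{θ₁}(x,t) − u^λ_{θ₂}(x,t) ∈ 4V_τ; that is, |⟨u^λ_{θ₁}−u^λ_{θ₂}, τ⟩| ≲ σ^{-2} and |⟨u^λ_{θ₁}−u^λ_{θ₂}, τ^⊥⟩| ≲ σ^{-1}R^{1/2}, with implicit constants depending only on finitely many derivative bounds of φ. -/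

import Mathlib

/-!
Common framework for formalizing "Square function estimates and Local smoothing
for Fourier Integral Operators" (Gao–Liu–Miao–Xi).

We work with `ℝ² = Fin 2 → ℝ` (frequency variables `η`) and
`ℝ³ = Fin 3 → ℝ` (space-time variables `z = (x, t)`, with `z 2 = t`).
-/

open MeasureTheory Real Set
open scoped ENNReal NNReal Classical

noncomputable section

namespace FIO

abbrev R2 : Type := Fin 2 → ℝ
abbrev R3 : Type := Fin 3 → ℝ

/-- Euclidean inner product on ℝ². -/
def dot2 (a b : R2) : ℝ := a 0 * b 0 + a 1 * b 1
/-- Euclidean inner product on ℝ³. -/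
def dot3 (a b : R3) : ℝ := a 0 * b 0 + a 1 * b 1 + a 2 * b 2
/-- Euclidean norm on ℝ². -/
def nrm2 (a : R2) : ℝ := Real.sqrt (dot2 a a)
/-- Euclidean norm on ℝ³. -/
def nrm3 (a : R3) : ℝ := Real.sqrt (dot3 a a)
/-- Normalized direction `a/|a|` of a vector in ℝ². -/
def dir (a : R2) : R2 := (nrm2 a)⁻¹ • a

/-- Closed Euclidean ball in ℝ². -/
def ball2 (c : R2) (r : ℝ) : Set R2 := {x | nrm2 (x - c) ≤ r}
/-- Closed Euclidean ball in ℝ³. -/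
def ball3 (c : R3) (r : ℝ) : Set R3 := {z | nrm3 (z - c) ≤ r}

/-- The base direction `e₂ = (0,1)`. -/
def e2 : R2 := ![0, 1]
/-- Unit vector at angle `α`. -/
def unitVec (α : ℝ) : R2 := ![Real.cos α, Real.sin α]
/-- Rotation of `v` by `π/2`. -/
def perp (v : R2) : R2 := ![-(v 1), v 0]
/-- Assemble `(x, t) ∈ ℝ² × ℝ` into a point of ℝ³. -/
def vec3 (x : R2) (t : ℝ) : R3 := ![x 0, x 1, t]
/-- The horizontal embedding `(v, 0)` of `v ∈ ℝ²` into ℝ³. -/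
def planar (v : R2) : R3 := ![v 0, v 1, 0]
/-- The first two (spatial) components of a vector of ℝ³. -/
def spatial (ξ : R3) : R2 := ![ξ 0, ξ 1]

/-- Partial derivative `∂_{z_i}` of a function `φ(z, η)`. -/
def pz (i : Fin 3) (ψ : R3 → R2 → ℝ) : R3 → R2 → ℝ :=
  fun z η => fderiv ℝ (fun w => ψ w η) z (Pi.single i 1)
/-- Partial derivative `∂_{η_j}` of a function `φ(z, η)`. -/
def pe (j : Fin 2) (ψ : R3 → R2 → ℝ) : R3 → R2 → ℝ :=
  fun z η => fderiv ℝ (fun ξ => ψ z ξ) η (Pi.single j 1)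

/-- Iterated partial derivatives `∂_z^β` indexed by a list (a multi-index). -/
def pzList : List (Fin 3) → (R3 → R2 → ℝ) → (R3 → R2 → ℝ)
  | [], ψ => ψ
  | i :: l, ψ => pz i (pzList l ψ)
/-- Iterated partial derivatives `∂_η^α` indexed by a list (a multi-index). -/
def peList : List (Fin 2) → (R3 → R2 → ℝ) → (R3 → R2 → ℝ)
  | [], ψ => ψ
  | j :: l, ψ => pe j (peList l ψ)

/-- Partial derivative of a function on ℝ². -/
def p2 (j : Fin 2) (g : R2 → ℝ) : R2 → ℝ := fun η => fderiv ℝ g η (Pi.single j 1)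
def p2List : List (Fin 2) → (R2 → ℝ) → (R2 → ℝ)
  | [], g => g
  | j :: l, g => p2 j (p2List l g)

/-- Partial derivative of a function on ℝ³. -/
def p3 (i : Fin 3) (g : R3 → ℝ) : R3 → ℝ := fun z => fderiv ℝ g z (Pi.single i 1)
def p3List : List (Fin 3) → (R3 → ℝ) → (R3 → ℝ)
  | [], g => g
  | i :: l, g => p3 i (p3List l g)

/-- The gradient `∂_z φ(z,η) ∈ ℝ³`. -/
def gradz (ψ : R3 → R2 → ℝ) (z : R3) (η : R2) : R3 :=
  ![pz 0 ψ z η, pz 1 ψ z η, pz 2 ψ z η]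
/-- The gradient `∂_η φ(z,η) ∈ ℝ²`. -/
def gradη (ψ : R3 → R2 → ℝ) (z : R3) (η : R2) : R2 :=
  ![pe 0 ψ z η, pe 1 ψ z η]

/-- The mixed Hessian `∂²_{zη} φ(z,η)`, a 3 × 2 matrix. -/
def mixedHessian (φ : R3 → R2 → ℝ) (z : R3) (η : R2) : Matrix (Fin 3) (Fin 2) ℝ :=
  Matrix.of fun i j => pe j (pz i φ) z η

/-- Cross product on ℝ³. -/
def cross3 (a b : R3) : R3 :=
  ![a 1 * b 2 - a 2 * b 1, a 2 * b 0 - a 0 * b 2, a 0 * b 1 - a 1 * b 0]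

/-- The vector `∂_{η_j} ∂_z φ(z,η) ∈ ℝ³`. -/
def dEtaGradz (φ : R3 → R2 → ℝ) (j : Fin 2) (z : R3) (η : R2) : R3 :=
  ![pe j (pz 0 φ) z η, pe j (pz 1 φ) z η, pe j (pz 2 φ) z η]

/-- `G₀(z,η) = ∂_{η₁}∂_zφ ∧ ∂_{η₂}∂_zφ`. -/
def coneG0 (φ : R3 → R2 → ℝ) (z : R3) (η : R2) : R3 :=
  cross3 (dEtaGradz φ 0 z η) (dEtaGradz φ 1 z η)

/-- The Gauss map `G = G₀/|G₀|`. -/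
def gaussMap (φ : R3 → R2 → ℝ) (z : R3) (η : R2) : R3 :=
  (nrm3 (coneG0 φ z η))⁻¹ • coneG0 φ z η

/-- The cone-condition Hessian `∂²_{ηη} ⟨∂_zφ(z,η), G(z,η₀)⟩ |_{η=η₀}`, a 2 × 2 matrix. -/
def coneHessian (φ : R3 → R2 → ℝ) (z : R3) (η0 : R2) : Matrix (Fin 2) (Fin 2) ℝ :=
  Matrix.of fun j k =>
    pe j (pe k (fun w ξ => dot3 (gradz φ w ξ) (gaussMap φ z η0))) z η0

/-- The matrix `∂²_{ηη} ∂_t ψ(z,η)|_{η=η₀}`. -/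
def tHessian (ψ : R3 → R2 → ℝ) (z : R3) (η0 : R2) : Matrix (Fin 2) (Fin 2) ℝ :=
  Matrix.of fun j k => pe j (pe k (pz 2 ψ)) z η0

/-- `φ ∈ C^∞(ℝ³ × (ℝ² ∖ {0}))`. -/
def SmoothPhase (φ : R3 → R2 → ℝ) : Prop :=
  ContDiffOn ℝ (⊤ : ℕ∞) (fun p : R3 × R2 => φ p.1 p.2) {p : R3 × R2 | p.2 ≠ 0}
/-- Homogeneity of degree 1 in `η`. -/
def HomogOne (φ : R3 → R2 → ℝ) : Prop :=
  ∀ (z : R3) (η : R2) (c : ℝ), 0 < c → φ z (c • η) = c * φ z η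
/-- Homogeneity of degree 0 for a function on ℝ². -/
def HomogZero2 (χ : R2 → ℝ) : Prop :=
  ∀ (η : R2) (c : ℝ), 0 < c → χ (c • η) = χ η

/-- Fourier transform on ℝ², with the convention `f̂(η) = ∫ e^{-i y·η} f(y) dy`. -/
def fhat (f : R2 → ℂ) (η : R2) : ℂ :=
  ∫ y : R2, Complex.exp (-(Complex.I * (dot2 y η : ℂ))) * f y
/-- Fourier transform on ℝ³, with the convention `F̂(ξ) = ∫ e^{-i w·ξ} F(w) dw`. -/
def fhat3 (F : R3 → ℂ) (ξ : R3) : ℂ :=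
  ∫ w : R3, Complex.exp (-(Complex.I * (dot3 w ξ : ℂ))) * F w

/-- The rescaled phase `φ^λ(z,η) = λ φ(z/λ, η)`. -/
def philam (φ : R3 → R2 → ℝ) (lam : ℝ) (z : R3) (η : R2) : ℝ := lam * φ (lam⁻¹ • z) η
/-- The rescaled amplitude `a^λ(z,η) = a(z/λ, η)`. -/
def alam (a : R3 → R2 → ℝ) (lam : ℝ) (z : R3) (η : R2) : ℝ := a (lam⁻¹ • z) η

/-- `𝓕^λ f(z) = ∫ e^{iφ^λ(z,η)} a^λ(z,η) f̂(η) dη`. -/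
def FIOlam (φ a : R3 → R2 → ℝ) (lam : ℝ) (f : R2 → ℂ) (z : R3) : ℂ :=
  ∫ η : R2, Complex.exp (Complex.I * (philam φ lam z η : ℂ)) * (alam a lam z η : ℂ) * fhat f η

/-- `𝓕^λ_θ f(z) = ∫ e^{iφ^λ(z,η)} χ(η) a^λ(z,η) f̂(η) dη` for a cutoff `χ`. -/
def FIOcut (φ a : R3 → R2 → ℝ) (χ : R2 → ℝ) (lam : ℝ) (f : R2 → ℂ) (z : R3) : ℂ :=
  ∫ η : R2, Complex.exp (Complex.I * (philam φ lam z η : ℂ)) *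
    ((χ η : ℂ) * (alam a lam z η : ℂ)) * fhat f η

/-- A phase/amplitude pair: `φ` smooth and 1-homogeneous, `a ∈ C_c^∞` with
`supp a ⊆ B_{ε₀}(0) × B_{ε₀}(e₂)`, satisfying the cinematic curvature condition
(non-degeneracy and cone condition) on `supp a`. -/
structure CinematicPair (ε0 : ℝ) (φ a : R3 → R2 → ℝ) : Prop where
  smooth_phase : SmoothPhase φ
  homog : HomogOne φ
  smooth_amp : ContDiff ℝ (⊤ : ℕ∞) (fun p : R3 × R2 => a p.1 p.2)
  supp_amp : ∀ (z : R3) (η : R2), a z η ≠ 0 → z ∈ ball3 0 ε0 ∧ η ∈ ball2 e2 ε0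
  nondeg : ∀ (z : R3) (η : R2), a z η ≠ 0 → (mixedHessian φ z η).rank = 2
  cone : ∀ (z : R3) (η : R2), a z η ≠ 0 → (coneHessian φ z η).rank = 1

/-- A cinematic pair which moreover satisfies the quantitative normalizations
`C1` (derivative bounds for `φ` up to order `M`), `C2` (derivative bounds for `a`)
and `C3` (support condition, part of `CinematicPair`). -/
structure AdmissiblePair (ε0 : ℝ) (M : ℕ) (φ a : R3 → R2 → ℝ) : Prop where
  cinematic : CinematicPair ε0 φ a
  C1 : ∀ (α : List (Fin 2)) (β : List (Fin 3)), α.length ≤ M → β.length ≤ M →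
    ∀ z ∈ ball3 0 ε0, ∀ η ∈ ball2 e2 ε0, |peList α (pzList β φ) z η| ≤ 1
  C2 : ∀ (β : List (Fin 3)), β.length ≤ M →
    ∀ z ∈ ball3 0 ε0, ∀ η ∈ ball2 e2 ε0, |pzList β a z η| ≤ 1

/-- Center of the `k`-th dyadic arc at level `m` (aperture `2π·2^{-m}`). -/
def capCenter (m k : ℕ) : R2 := unitVec (2 * π * ((k : ℝ) + 1 / 2) / 2 ^ m)

/-- `η` lies in the sector of (chordal) width `δ` around the unit direction `c`. -/
def inSector (c : R2) (δ : ℝ) (η : R2) : Prop := η ≠ 0 ∧ nrm2 (dir η - c) ≤ δ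

/-- `2^L ≈ √r`. -/
def DyadicScale (r : ℝ) (L : ℕ) : Prop :=
  Real.sqrt r ≤ 2 ^ L ∧ (2 : ℝ) ^ L ≤ 2 * Real.sqrt r

/-- A smooth partition of unity `{χ_θ}` on `ℝ² ∖ {0}` subordinate to the `2^L`
dyadic arcs of aperture `≈ R^{-1/2}`, each `χ_θ` homogeneous of degree 0 and with
the natural derivative bounds. -/
structure IsArcPartition (R : ℝ) (L : ℕ) (χ : ℕ → R2 → ℝ) : Prop where
  scale : DyadicScale R L
  smooth : ∀ j, ContDiffOn ℝ (⊤ : ℕ∞) (χ j) {η : R2 | η ≠ 0}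
  homog : ∀ j, HomogZero2 (χ j)
  sector : ∀ (j : ℕ) (η : R2), χ j η ≠ 0 → inSector (capCenter L j) (2 * π / 2 ^ L) η
  partition : ∀ η : R2, η ≠ 0 → ∑ j ∈ Finset.range (2 ^ L), χ j η = 1
  vanish : ∀ j, 2 ^ L ≤ j → ∀ η, χ j η = 0
  derivBound : ∀ (j : ℕ) (α : List (Fin 2)), α.length ≤ 100 →
    ∀ η : R2, 1 / 2 ≤ nrm2 η → nrm2 η ≤ 2 → |p2List α (χ j) η| ≤ ((2 : ℝ) ^ L) ^ α.length

/-- `F_θ = 𝓕^λ_θ f` for the `j`-th arc of the partition. -/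
def Farc (φ a : R3 → R2 → ℝ) (χ : ℕ → R2 → ℝ) (lam : ℝ) (f : R2 → ℂ) (j : ℕ) : R3 → ℂ :=
  FIOcut φ a (χ j) lam f

/-- Indices of the level-`L` arcs `θ` contained in the `k`-th cap `τ` at level `m`. -/
def capArcs (L m k : ℕ) : Finset ℕ :=
  (Finset.range (2 ^ L)).filter fun j => j / 2 ^ (L - m) = k

/-- `F_τ = Σ_{θ ⊂ τ} F_θ` for the cap `τ = (m,k)`. -/
def Fcap (φ a : R3 → R2 → ℝ) (χ : ℕ → R2 → ℝ) (lam : ℝ) (f : R2 → ℂ) (L m k : ℕ) : R3 → ℂ :=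
  fun z => ∑ j ∈ capArcs L m k, Farc φ a χ lam f j z

/-- `Σ_{θ ⊂ τ} |F_θ(z)|²` for the cap `τ = (m,k)` (the square of `S_U F` pointwise). -/
def sqSub (φ a : R3 → R2 → ℝ) (χ : ℕ → R2 → ℝ) (lam : ℝ) (f : R2 → ℂ) (L m k : ℕ)
    (z : R3) : ℝ≥0∞ :=
  ∑ j ∈ capArcs L m k, (‖Farc φ a χ lam f j z‖₊ : ℝ≥0∞) ^ 2

/-- `Σ_{d(τ)=2^{-m}} |F_τ(z)|²` (the square of `S_{B_r} F` pointwise, for `2^m ≈ √r`). -/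
def sqAt (φ a : R3 → R2 → ℝ) (χ : ℕ → R2 → ℝ) (lam : ℝ) (f : R2 → ℂ) (L m : ℕ)
    (z : R3) : ℝ≥0∞ :=
  ∑ k ∈ Finset.range (2 ^ m), (‖Fcap φ a χ lam f L m k z‖₊ : ℝ≥0∞) ^ 2

/-- The curved tube (slab) `U ∥ U_τ` indexed by `n ∈ ℤ²`, for a cap of aperture `s`
with center direction `c`, at spatial scale `R`: in the coordinates
`u = ∂_η φ^λ(z, c)` it is the translate by `R s² ·(n₁ s^{-1} c^⊥ + n₂ c)` of the
`Rs² × Rs × R` slab `V_τ × (-R,R)`.  (This is the explicit description of the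
wave packets `U ∥ U_τ` from Section 7 of the paper, equivalent to the definition
via the change of variables `x_τ^λ`.) -/
def tube (φ : R3 → R2 → ℝ) (lam R s : ℝ) (c : R2) (n : ℤ × ℤ) : Set R3 :=
  {z | |z 2| ≤ R ∧
    |dot2 (gradη (philam φ lam) z c) c - R * s ^ 2 * (n.2 : ℝ)| ≤ R * s ^ 2 ∧
    |dot2 (gradη (philam φ lam) z c) (perp c) - R * s * (n.1 : ℝ)| ≤ R * s}

/-- The weight `w_{B_R}(z) = (1 + R^{-1}|z - z₀|)^{-M}`. -/
def wt (z0 : R3) (R : ℝ) (M : ℕ) (z : R3) : ℝ := (1 + R⁻¹ * nrm3 (z - z0)) ^ (-(M : ℝ))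

/-- `|U| ≈ R³ s³`, the volume of a tube `U ∥ U_τ`. -/
def tubeVol (R s : ℝ) : ℝ≥0∞ := ENNReal.ofReal (R ^ 3 * s ^ 3)

/-- The right-hand side
`Σ_{dyadic s ∈ [R^{-1/2},1]} Σ_{d(τ)=s} Σ_{U ∥ U_τ} |U|^{-1} ‖S_U F‖⁴_{L²(w_{B_R})}`,
where `‖S_U F‖²_{L²(w)} = ∫_U Σ_{θ⊂τ} |F_θ|² w`. -/
def sqRHSw (φ a : R3 → R2 → ℝ) (χ : ℕ → R2 → ℝ) (lam : ℝ) (f : R2 → ℂ) (L : ℕ) (R : ℝ)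
    (z0 : R3) (M : ℕ) : ℝ≥0∞ :=
  ∑ m ∈ Finset.range (L + 1), ∑ k ∈ Finset.range (2 ^ m), ∑' n : ℤ × ℤ,
    (tubeVol R ((2 : ℝ) ^ m)⁻¹)⁻¹ *
      (∫⁻ z in tube φ lam R ((2 : ℝ) ^ m)⁻¹ (capCenter m k) n,
        sqSub φ a χ lam f L m k z * ENNReal.ofReal (wt z0 R M z)) ^ 2

/-- A ball of radius `r` from the lattice tiling `{B_r}` used in `Σ_{B_r ⊂ B_R}`. -/
def latticeBall (z0 : R3) (r : ℝ) (c : Fin 3 → ℤ) : Set R3 :=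
  ball3 (fun i => z0 i + r * (c i : ℝ)) r

/-- The left-hand side `Σ_{B_r ⊂ B_R} |B_r|^{-1} ‖S_{B_r} F‖⁴_{L²(B_r)}`, where
`S_{B_r}F = (Σ_{d(θ)=r^{-1/2}} |F_θ|²)^{1/2}·1_{B_r}` and the caps of aperture
`r^{-1/2}` are those of level `Lr` (with `2^{Lr} ≈ √r`). -/
def sqLHS (φ a : R3 → R2 → ℝ) (χ : ℕ → R2 → ℝ) (lam : ℝ) (f : R2 → ℂ) (L Lr : ℕ)
    (r R : ℝ) (z0 : R3) : ℝ≥0∞ :=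
  ∑' c : Fin 3 → ℤ,
    if latticeBall z0 r c ⊆ ball3 z0 R then
      (ENNReal.ofReal (r ^ 3))⁻¹ * (∫⁻ z in latticeBall z0 r c, sqAt φ a χ lam f L Lr z) ^ 2
    else 0

/-- `‖f‖²_{L²(ℝ²)}`. -/
def L2sq (f : R2 → ℂ) : ℝ≥0∞ := ∫⁻ y : R2, (‖f y‖₊ : ℝ≥0∞) ^ 2

/-- The defining inequality for the square function constant `S(r,R,λ)`:
for every `N` there is `C_N` such that for every admissible pair `(φ,a)`, every
arc decomposition at scale `R` (level `L`) and at scale `r` (level `Lr`), every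
ball `B_R(z₀) ⊆ B_λ` and every Schwartz `f`,
`Σ_{B_r⊂B_R}|B_r|^{-1}‖S_{B_r}F‖⁴_{L²(B_r)} ≤ A·Σ_s Σ_τ Σ_U |U|^{-1}‖S_U F‖⁴_{L²(w_{B_R})} + C_N λ^{-N} ‖f‖⁴_{L²}`. -/
def SqIneq (ε0 : ℝ) (M : ℕ) (r R lam : ℝ) (A : ℝ≥0∞) : Prop :=
  ∀ N : ℕ, ∃ C : ℝ, 0 < C ∧
    ∀ φ a : R3 → R2 → ℝ, AdmissiblePair ε0 M φ a →
    ∀ (L Lr : ℕ) (χ : ℕ → R2 → ℝ), IsArcPartition R L χ → DyadicScale r Lr → Lr ≤ L →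
    ∀ z0 : R3, ball3 z0 R ⊆ ball3 0 lam →
    ∀ f : SchwartzMap R2 ℂ,
      sqLHS φ a χ lam (⇑f) L Lr r R z0 ≤
        A * sqRHSw φ a χ lam (⇑f) L R z0 M +
          ENNReal.ofReal (C * lam ^ (-(N : ℝ))) * (L2sq ⇑f) ^ 2

/-- The square function constant `S(r, R, λ)`: the smallest constant `A` for which
the defining inequality `SqIneq` holds. -/
def SqConst (ε0 : ℝ) (M : ℕ) (r R lam : ℝ) : ℝ≥0∞ :=
  sInf {A : ℝ≥0∞ | SqIneq ε0 M r R lam A}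

/-- The box `Θ_{σ,τ}` of dimensions `A × B × D` centered at the origin, with
`A`-edge parallel to `(c,0)`, `B`-edge parallel to `(c^⊥,0)` and `D`-edge vertical. -/
def box (c : R2) (A B D : ℝ) : Set R3 :=
  {ξ : R3 | |dot3 ξ (planar c)| ≤ A ∧ |dot3 ξ (planar (perp c))| ≤ B ∧ |ξ 2| ≤ D}

/-- The Jacobian matrix `(∂g_i/∂z_j)_{ij}` of a map `g : ℝ³ → ℝ³`. -/
def jac3 (g : R3 → R3) (z : R3) : Matrix (Fin 3) (Fin 3) ℝ :=
  Matrix.of fun i j => fderiv ℝ (fun w => g w i) z (Pi.single j 1)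

/-- The map `z = (x,t) ↦ (u_θ(x,t), t)` built from `u_θ`. -/
def umap3 (U : R3 → R2) (z : R3) : R3 := vec3 (U z) (z 2)
/-- The map `(u,t) ↦ (x_θ(u,t), t)` built from `x_θ`. -/
def xmap3 (X : R2 → ℝ → R2) (w : R3) : R3 := vec3 (X ![w 0, w 1] (w 2)) (w 2)

/-- The rotation `A_τ` with `A_τ e₂ = c`. -/
def rot (c u : R2) : R2 := ![c 1 * u 0 + c 0 * u 1, -(c 0) * u 0 + c 1 * u 1]

/-- The Lorentz-rescaled phase
`φ̃_s(u,t,η) = s^{-2} φ(x_τ(A_τ(su₁, s²u₂), t), t, A_τ(sη₁, η₂))`,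
where `x_τ = X` and `A_τ = rot c`. -/
def phiTildeS (φ : R3 → R2 → ℝ) (c : R2) (X : R2 → ℝ → R2) (s : ℝ) : R3 → R2 → ℝ :=
  fun w η =>
    s⁻¹ ^ 2 * φ (vec3 (X (rot c ![s * w 0, s ^ 2 * w 1]) (w 2)) (w 2)) (rot c ![s * η 0, η 1])

/-- The base point `(x_τ(A_τ(su₁, s²u₂), t), t)` of the Lorentz rescaling. -/
def zBase (c : R2) (X : R2 → ℝ → R2) (s : ℝ) (w : R3) : R3 :=
  vec3 (X (rot c ![s * w 0, s ^ 2 * w 1]) (w 2)) (w 2)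



/-! ### Auxiliary lemmas for Statement 11 -/

section Statement11Aux

/-! #### Euclidean norm helpers -/

private lemma dot2_self_nonneg (v : R2) : 0 ≤ dot2 v v := by
  simp only [dot2]; nlinarith [sq_nonneg (v 0), sq_nonneg (v 1)]

private lemma dot3_self_nonneg (v : R3) : 0 ≤ dot3 v v := by
  simp only [dot3]; nlinarith [sq_nonneg (v 0), sq_nonneg (v 1), sq_nonneg (v 2)]

private lemma nrm2_nonneg (v : R2) : 0 ≤ nrm2 v := Real.sqrt_nonneg _

private lemma nrm3_nonneg (v : R3) : 0 ≤ nrm3 v := Real.sqrt_nonneg _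

private lemma nrm2_sq (v : R2) : nrm2 v ^ 2 = dot2 v v := Real.sq_sqrt (dot2_self_nonneg v)

private lemma nrm2_le_of_sq_le {v : R2} {r : ℝ} (hr : 0 ≤ r) (h : dot2 v v ≤ r ^ 2) :
    nrm2 v ≤ r := by
  have h2 := Real.sqrt_le_sqrt h
  rwa [Real.sqrt_sq hr] at h2

private lemma sq_le_of_nrm2_le {v : R2} {r : ℝ} (h : nrm2 v ≤ r) : dot2 v v ≤ r ^ 2 := by
  rw [← nrm2_sq]
  exact pow_le_pow_left₀ (nrm2_nonneg v) h 2

private lemma dot2_sq_le (a b : R2) : dot2 a b ^ 2 ≤ dot2 a a * dot2 b b := by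
  simp only [dot2]; nlinarith [sq_nonneg (a 0 * b 1 - a 1 * b 0)]

private lemma abs_dot2_le (a b : R2) : |dot2 a b| ≤ nrm2 a * nrm2 b := by
  rw [← Real.sqrt_sq_eq_abs, nrm2, nrm2, ← Real.sqrt_mul (dot2_self_nonneg a)]
  exact Real.sqrt_le_sqrt (dot2_sq_le a b)

private lemma abs_coord2_le (v : R2) (j : Fin 2) : |v j| ≤ nrm2 v := by
  have h : (v j) ^ 2 ≤ dot2 v v := by
    have hj : j = 0 ∨ j = 1 := by omega
    rcases hj with h | h <;> subst h <;>
      (simp only [dot2]; nlinarith [sq_nonneg (v 0), sq_nonneg (v 1)])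
  calc |v j| = Real.sqrt ((v j) ^ 2) := (Real.sqrt_sq_eq_abs _).symm
    _ ≤ Real.sqrt (dot2 v v) := Real.sqrt_le_sqrt h

private lemma abs_coord3_le (v : R3) (i : Fin 3) : |v i| ≤ nrm3 v := by
  have h : (v i) ^ 2 ≤ dot3 v v := by
    have hi : i = 0 ∨ i = 1 ∨ i = 2 := by omega
    rcases hi with h | h | h <;> subst h <;>
      (simp only [dot3]; nlinarith [sq_nonneg (v 0), sq_nonneg (v 1), sq_nonneg (v 2)])
  calc |v i| = Real.sqrt ((v i) ^ 2) := (Real.sqrt_sq_eq_abs _).symm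
    _ ≤ Real.sqrt (dot3 v v) := Real.sqrt_le_sqrt h

private lemma nrm3_smul (a : ℝ) (v : R3) : nrm3 (a • v) = |a| * nrm3 v := by
  simp only [nrm3, dot3, Pi.smul_apply, smul_eq_mul]
  rw [show a * v 0 * (a * v 0) + a * v 1 * (a * v 1) + a * v 2 * (a * v 2)
      = a ^ 2 * (v 0 * v 0 + v 1 * v 1 + v 2 * v 2) by ring,
    Real.sqrt_mul (sq_nonneg a), Real.sqrt_sq_eq_abs]

/-! #### Joint-smoothness infrastructure -/

private def JJ (ψ : R3 → R2 → ℝ) : R3 × R2 → ℝ := fun p => ψ p.1 p.2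

private def Udom : Set (R3 × R2) := {p : R3 × R2 | p.2 ≠ 0}

private lemma isOpen_Udom : IsOpen Udom :=
  isOpen_compl_singleton.preimage continuous_snd

private lemma hasFDerivAt_slice_eta {ψ : R3 → R2 → ℝ} (hψ : ContDiffOn ℝ (⊤ : ℕ∞) (JJ ψ) Udom)
    (z : R3) {η : R2} (hη : η ≠ 0) :
    HasFDerivAt (fun ξ => ψ z ξ)
      ((fderiv ℝ (JJ ψ) (z, η)).comp (ContinuousLinearMap.inr ℝ R3 R2)) η := by
  have hd : DifferentiableAt ℝ (JJ ψ) (z, η) :=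
    (hψ.contDiffAt (isOpen_Udom.mem_nhds hη)).differentiableAt (by simp)
  exact hd.hasFDerivAt.comp η (hasFDerivAt_prodMk_right z η)

private lemma hasFDerivAt_slice_z {ψ : R3 → R2 → ℝ} (hψ : ContDiffOn ℝ (⊤ : ℕ∞) (JJ ψ) Udom)
    {η : R2} (hη : η ≠ 0) (z : R3) :
    HasFDerivAt (fun y => ψ y η)
      ((fderiv ℝ (JJ ψ) (z, η)).comp (ContinuousLinearMap.inl ℝ R3 R2)) z := by
  have hd : DifferentiableAt ℝ (JJ ψ) (z, η) :=
    (hψ.contDiffAt (isOpen_Udom.mem_nhds hη)).differentiableAt (by simp)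
  exact hd.hasFDerivAt.comp z (hasFDerivAt_prodMk_left (𝕜 := ℝ) z η)

private lemma diffAt_slice_eta {ψ : R3 → R2 → ℝ} (hψ : ContDiffOn ℝ (⊤ : ℕ∞) (JJ ψ) Udom)
    (z : R3) {η : R2} (hη : η ≠ 0) :
    DifferentiableAt ℝ (fun ξ => ψ z ξ) η :=
  (hasFDerivAt_slice_eta hψ z hη).differentiableAt

private lemma pe_eq {ψ : R3 → R2 → ℝ} (hψ : ContDiffOn ℝ (⊤ : ℕ∞) (JJ ψ) Udom)
    (j : Fin 2) (z : R3) {η : R2} (hη : η ≠ 0) :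
    pe j ψ z η = fderiv ℝ (JJ ψ) (z, η) (0, Pi.single j 1) := by
  have h := (hasFDerivAt_slice_eta hψ z hη).fderiv
  simp only [pe]
  rw [h]
  simp

private lemma pz_eq {ψ : R3 → R2 → ℝ} (hψ : ContDiffOn ℝ (⊤ : ℕ∞) (JJ ψ) Udom)
    (i : Fin 3) (z : R3) {η : R2} (hη : η ≠ 0) :
    pz i ψ z η = fderiv ℝ (JJ ψ) (z, η) (Pi.single i 1, 0) := by
  have h := (hasFDerivAt_slice_z hψ hη z).fderiv
  simp only [pz]
  rw [h]
  simp

private lemma smooth_pe {ψ : R3 → R2 → ℝ} (hψ : ContDiffOn ℝ (⊤ : ℕ∞) (JJ ψ) Udom) (j : Fin 2) :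
    ContDiffOn ℝ (⊤ : ℕ∞) (JJ (pe j ψ)) Udom := by
  have h1 : ContDiffOn ℝ (⊤ : ℕ∞) (fun p : R3 × R2 => fderiv ℝ (JJ ψ) p (0, Pi.single j 1)) Udom :=
    (hψ.fderiv_of_isOpen isOpen_Udom (by simp)).clm_apply contDiffOn_const
  exact h1.congr fun p hp => pe_eq hψ j p.1 hp

private lemma smooth_pz {ψ : R3 → R2 → ℝ} (hψ : ContDiffOn ℝ (⊤ : ℕ∞) (JJ ψ) Udom) (i : Fin 3) :
    ContDiffOn ℝ (⊤ : ℕ∞) (JJ (pz i ψ)) Udom := by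
  have h1 : ContDiffOn ℝ (⊤ : ℕ∞) (fun p : R3 × R2 => fderiv ℝ (JJ ψ) p (Pi.single i 1, 0)) Udom :=
    (hψ.fderiv_of_isOpen isOpen_Udom (by simp)).clm_apply contDiffOn_const
  exact h1.congr fun p hp => pz_eq hψ i p.1 hp

private lemma snd_symm {ψ : R3 → R2 → ℝ} (hψ : ContDiffOn ℝ (⊤ : ℕ∞) (JJ ψ) Udom)
    (z : R3) {η : R2} (hη : η ≠ 0) (v w : R3 × R2) :
    fderiv ℝ (fun p => fderiv ℝ (JJ ψ) p v) (z, η) w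
      = fderiv ℝ (fun p => fderiv ℝ (JJ ψ) p w) (z, η) v := by
  have hd : DifferentiableAt ℝ (fderiv ℝ (JJ ψ)) (z, η) :=
    ((hψ.fderiv_of_isOpen (m := (⊤ : ℕ∞)) isOpen_Udom (by simp)).contDiffAt
      (isOpen_Udom.mem_nhds hη)).differentiableAt (by simp)
  have hev : ∀ᶠ y in nhds (z, η), HasFDerivAt (JJ ψ) (fderiv ℝ (JJ ψ) y) y := by
    filter_upwards [isOpen_Udom.mem_nhds hη] with y hy
    exact ((hψ.contDiffAt (isOpen_Udom.mem_nhds hy)).differentiableAt (by simp)).hasFDerivAt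
  have hsym := second_derivative_symmetric_of_eventually hev hd.hasFDerivAt v w
  have hv : fderiv ℝ (fun p => fderiv ℝ (JJ ψ) p v) (z, η)
      = (ContinuousLinearMap.apply ℝ ℝ v).comp (fderiv ℝ (fderiv ℝ (JJ ψ)) (z, η)) :=
    ((ContinuousLinearMap.apply ℝ ℝ v).hasFDerivAt.comp (z, η) hd.hasFDerivAt).fderiv
  have hw : fderiv ℝ (fun p => fderiv ℝ (JJ ψ) p w) (z, η)
      = (ContinuousLinearMap.apply ℝ ℝ w).comp (fderiv ℝ (fderiv ℝ (JJ ψ)) (z, η)) :=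
    ((ContinuousLinearMap.apply ℝ ℝ w).hasFDerivAt.comp (z, η) hd.hasFDerivAt).fderiv
  rw [hv, hw]
  simpa using hsym.symm

private lemma pz_pe_swap {ψ : R3 → R2 → ℝ} (hψ : ContDiffOn ℝ (⊤ : ℕ∞) (JJ ψ) Udom)
    (i : Fin 3) (j : Fin 2) {η : R2} (hη : η ≠ 0) (z : R3) :
    pz i (pe j ψ) z η = pe j (pz i ψ) z η := by
  have e1 : pz i (pe j ψ) z η = fderiv ℝ (JJ (pe j ψ)) (z, η) (Pi.single i 1, 0) :=
    pz_eq (smooth_pe hψ j) i z hη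
  have e2 : pe j (pz i ψ) z η = fderiv ℝ (JJ (pz i ψ)) (z, η) (0, Pi.single j 1) :=
    pe_eq (smooth_pz hψ i) j z hη
  have c1 : fderiv ℝ (JJ (pe j ψ)) (z, η)
      = fderiv ℝ (fun p : R3 × R2 => fderiv ℝ (JJ ψ) p (0, Pi.single j 1)) (z, η) := by
    apply Filter.EventuallyEq.fderiv_eq
    filter_upwards [isOpen_Udom.mem_nhds hη] with p hp
    exact pe_eq hψ j p.1 hp
  have c2 : fderiv ℝ (JJ (pz i ψ)) (z, η)
      = fderiv ℝ (fun p : R3 × R2 => fderiv ℝ (JJ ψ) p (Pi.single i 1, 0)) (z, η) := by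
    apply Filter.EventuallyEq.fderiv_eq
    filter_upwards [isOpen_Udom.mem_nhds hη] with p hp
    exact pz_eq hψ i p.1 hp
  rw [e1, c1, e2, c2]
  exact snd_symm hψ z hη (0, Pi.single j 1) (Pi.single i 1, 0)

private lemma pe_pe_swap {ψ : R3 → R2 → ℝ} (hψ : ContDiffOn ℝ (⊤ : ℕ∞) (JJ ψ) Udom)
    (k j : Fin 2) {η : R2} (hη : η ≠ 0) (z : R3) :
    pe k (pe j ψ) z η = pe j (pe k ψ) z η := by
  have e1 : pe k (pe j ψ) z η = fderiv ℝ (JJ (pe j ψ)) (z, η) (0, Pi.single k 1) :=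
    pe_eq (smooth_pe hψ j) k z hη
  have e2 : pe j (pe k ψ) z η = fderiv ℝ (JJ (pe k ψ)) (z, η) (0, Pi.single j 1) :=
    pe_eq (smooth_pe hψ k) j z hη
  have c1 : fderiv ℝ (JJ (pe j ψ)) (z, η)
      = fderiv ℝ (fun p : R3 × R2 => fderiv ℝ (JJ ψ) p (0, Pi.single j 1)) (z, η) := by
    apply Filter.EventuallyEq.fderiv_eq
    filter_upwards [isOpen_Udom.mem_nhds hη] with p hp
    exact pe_eq hψ j p.1 hp
  have c2 : fderiv ℝ (JJ (pe k ψ)) (z, η)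
      = fderiv ℝ (fun p : R3 × R2 => fderiv ℝ (JJ ψ) p (0, Pi.single k 1)) (z, η) := by
    apply Filter.EventuallyEq.fderiv_eq
    filter_upwards [isOpen_Udom.mem_nhds hη] with p hp
    exact pe_eq hψ k p.1 hp
  rw [e1, c1, e2, c2]
  exact snd_symm hψ z hη (0, Pi.single j 1) (0, Pi.single k 1)

private lemma pe_congr {χ₁ χ₂ : R3 → R2 → ℝ}
    (h : ∀ (y : R3) (ξ : R2), ξ ≠ 0 → χ₁ y ξ = χ₂ y ξ)
    (k : Fin 2) (y : R3) {η : R2} (hη : η ≠ 0) : pe k χ₁ y η = pe k χ₂ y η := by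
  simp only [pe]
  have hev : (fun ξ => χ₁ y ξ) =ᶠ[nhds η] (fun ξ => χ₂ y ξ) := by
    filter_upwards [isOpen_compl_singleton.mem_nhds hη] with ξ hξ
    exact h y ξ hξ
  rw [hev.fderiv_eq]

private lemma clm2_apply (L : R2 →L[ℝ] ℝ) (v : R2) :
    L v = v 0 * L (Pi.single 0 1) + v 1 * L (Pi.single 1 1) := by
  have hv : v = v 0 • (Pi.single 0 1 : R2) + v 1 • (Pi.single 1 1 : R2) := by
    funext x
    fin_cases x <;> simp [Pi.single_apply]
  conv_lhs => rw [hv]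
  simp only [map_add, _root_.map_smul, smul_eq_mul]

private lemma clm3_apply (L : R3 →L[ℝ] ℝ) (v : R3) :
    L v = v 0 * L (Pi.single 0 1) + v 1 * L (Pi.single 1 1) + v 2 * L (Pi.single 2 1) := by
  have hv : v = v 0 • (Pi.single 0 1 : R3) + v 1 • (Pi.single 1 1 : R3)
      + v 2 • (Pi.single 2 1 : R3) := by
    funext x
    fin_cases x <;> simp [Pi.single_apply]
  conv_lhs => rw [hv]
  simp only [map_add, _root_.map_smul, smul_eq_mul]

private lemma pe_homog0 {φ : R3 → R2 → ℝ} (hφ : ContDiffOn ℝ (⊤ : ℕ∞) (JJ φ) Udom)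
    (hhom : HomogOne φ) (j : Fin 2) (z : R3) {η : R2} (hη : η ≠ 0) {a : ℝ} (ha : 0 < a) :
    pe j φ z (a • η) = pe j φ z η := by
  have hη' : a • η ≠ 0 := smul_ne_zero ha.ne' hη
  have hF1 : DifferentiableAt ℝ (fun ξ => φ z ξ) (a • η) := diffAt_slice_eta hφ z hη'
  have hF2 : DifferentiableAt ℝ (fun ξ => φ z ξ) η := diffAt_slice_eta hφ z hη
  have hc : HasFDerivAt (fun ξ : R2 => a • ξ) (a • ContinuousLinearMap.id ℝ R2) η :=
    (hasFDerivAt_id η).const_smul a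
  have h1 : HasFDerivAt (fun ξ : R2 => φ z (a • ξ))
      ((fderiv ℝ (fun ξ => φ z ξ) (a • η)).comp (a • ContinuousLinearMap.id ℝ R2)) η :=
    hF1.hasFDerivAt.comp η hc
  have h2 : HasFDerivAt (fun ξ : R2 => a * φ z ξ) (a • fderiv ℝ (fun ξ => φ z ξ) η) η := by
    exact hF2.hasFDerivAt.const_mul a
  have heq : (fun ξ : R2 => φ z (a • ξ)) = fun ξ => a * φ z ξ := funext fun ξ => hhom z ξ a ha
  rw [heq] at h1
  have huniq := h1.unique h2
  have happ := congrArg (fun L : R2 →L[ℝ] ℝ => L (Pi.single j 1)) huniq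
  simp only [ContinuousLinearMap.comp_apply, ContinuousLinearMap.smul_apply,
    ContinuousLinearMap.id_apply, _root_.map_smul, smul_eq_mul] at happ
  simp only [pe]
  exact mul_left_cancel₀ ha.ne' happ

private lemma euler_pe {χ : R3 → R2 → ℝ} (hχ : ContDiffOn ℝ (⊤ : ℕ∞) (JJ χ) Udom)
    (hhom0 : ∀ (z : R3) (ξ : R2), ξ ≠ 0 → ∀ a : ℝ, 0 < a → χ z (a • ξ) = χ z ξ)
    (z : R3) {η : R2} (hη : η ≠ 0) :
    η 0 * pe 0 χ z η + η 1 * pe 1 χ z η = 0 := by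
  have hF : DifferentiableAt ℝ (fun ξ => χ z ξ) η := diffAt_slice_eta hχ z hη
  have hline : HasDerivAt (fun t : ℝ => t • η) η 1 := by
    simpa using (hasDerivAt_id (1 : ℝ)).smul_const η
  have hm : HasDerivAt (fun t : ℝ => χ z (t • η)) (fderiv ℝ (fun ξ => χ z ξ) η η) 1 := by
    have hF' : HasFDerivAt (fun ξ => χ z ξ) (fderiv ℝ (fun ξ => χ z ξ) η)
        ((fun t : ℝ => t • η) 1) := by
      rw [show (fun t : ℝ => t • η) 1 = η from one_smul ℝ η]
      exact hF.hasFDerivAt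
    exact hF'.comp_hasDerivAt 1 hline
  have hconst : HasDerivAt (fun t : ℝ => χ z (t • η)) 0 1 := by
    refine (hasDerivAt_const 1 (χ z η)).congr_of_eventuallyEq ?_
    filter_upwards [eventually_gt_nhds (zero_lt_one)] with t ht
    exact hhom0 z η hη t ht
  have h0 : fderiv ℝ (fun ξ => χ z ξ) η η = 0 := hm.unique hconst
  have hdec := clm2_apply (fderiv ℝ (fun ξ => χ z ξ) η) η
  rw [h0] at hdec
  simp only [pe]
  linarith [hdec]

private lemma pe_pe_zero (φ : R3 → R2 → ℝ) (hzero : ∀ η : R2, φ 0 η = 0)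
    (j k : Fin 2) (η : R2) : pe k (pe j φ) 0 η = 0 := by
  have h : (fun ξ' => φ 0 ξ') = fun _ : R2 => (0 : ℝ) := funext hzero
  simp only [pe, h, fderiv_const]
  simp

private lemma pe_line_hasDerivAt {χ : R3 → R2 → ℝ} (hχ : ContDiffOn ℝ (⊤ : ℕ∞) (JJ χ) Udom)
    (w : R3) (θ d : R2) {t : ℝ} (hne : θ + t • d ≠ 0) :
    HasDerivAt (fun s : ℝ => χ w (θ + s • d))
      (d 0 * pe 0 χ w (θ + t • d) + d 1 * pe 1 χ w (θ + t • d)) t := by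
  have hline : HasDerivAt (fun s : ℝ => θ + s • d) d t := by
    simpa using ((hasDerivAt_id t).smul_const d).const_add θ
  have hdiff : DifferentiableAt ℝ (fun ξ => χ w ξ) (θ + t • d) := diffAt_slice_eta hχ w hne
  have h := hdiff.hasFDerivAt.comp_hasDerivAt t hline
  have hexp := clm2_apply (fderiv ℝ (fun ξ => χ w ξ) (θ + t • d)) d
  rw [hexp] at h
  exact h

private lemma key_small {φ : R3 → R2 → ℝ} (hφ : ContDiffOn ℝ (⊤ : ℕ∞) (JJ φ) Udom)
    (hzero : ∀ η : R2, φ 0 η = 0)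
    (hbound : ∀ (α : List (Fin 2)) (β : List (Fin 3)), α.length ≤ 100 → β.length ≤ 100 →
          ∀ z ∈ ball3 0 1, ∀ η : R2, 1 / 2 ≤ nrm2 η → nrm2 η ≤ 2 →
            |peList α (pzList β φ) z η| ≤ 1)
    (j k : Fin 2) (y : R3) (hy : nrm3 y ≤ 1) {η : R2}
    (hη1 : 1 / 2 ≤ nrm2 η) (hη2 : nrm2 η ≤ 2) :
    |pe k (pe j φ) y η| ≤ 3 * nrm3 y := by
  have hη : η ≠ 0 := by
    intro h0
    rw [h0] at hη1
    norm_num [nrm2, dot2] at hη1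
  have hH : ContDiffOn ℝ (⊤ : ℕ∞) (JJ (pe k (pe j φ))) Udom := smooth_pe (smooth_pe hφ j) k
  set f' : ℝ → ℝ := fun s =>
    y 0 * pz 0 (pe k (pe j φ)) (s • y) η + y 1 * pz 1 (pe k (pe j φ)) (s • y) η
      + y 2 * pz 2 (pe k (pe j φ)) (s • y) η with hf'
  have hderiv : ∀ s ∈ Icc (0:ℝ) 1,
      HasDerivWithinAt (fun s : ℝ => pe k (pe j φ) (s • y) η) (f' s) (Icc 0 1) s := by
    intro s _
    apply HasDerivAt.hasDerivWithinAt
    have hline : HasDerivAt (fun s : ℝ => s • y) y s := by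
      simpa using (hasDerivAt_id s).smul_const y
    have hdiff : DifferentiableAt ℝ (fun u => pe k (pe j φ) u η) (s • y) :=
      (hasFDerivAt_slice_z hH hη (s • y)).differentiableAt
    have h := hdiff.hasFDerivAt.comp_hasDerivAt s hline
    have hexp := clm3_apply (fderiv ℝ (fun u => pe k (pe j φ) u η) (s • y)) y
    rw [hexp] at h
    exact h
  have hbd : ∀ s ∈ Ico (0:ℝ) 1, ‖f' s‖ ≤ 3 * nrm3 y := by
    intro s hs
    have hmem : (s • y) ∈ ball3 (0 : R3) 1 := by
      simp only [ball3, Set.mem_setOf_eq, sub_zero]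
      rw [nrm3_smul, abs_of_nonneg hs.1]
      nlinarith [nrm3_nonneg y, hs.2.le]
    have hswap : ∀ i : Fin 3,
        pz i (pe k (pe j φ)) (s • y) η = pe k (pe j (pz i φ)) (s • y) η := by
      intro i
      rw [pz_pe_swap (smooth_pe hφ j) i k hη (s • y)]
      exact pe_congr (fun y' ξ hξ => pz_pe_swap hφ i j hξ y') k (s • y) hη
    have hb : ∀ i : Fin 3, |pe k (pe j (pz i φ)) (s • y) η| ≤ 1 := fun i =>
      hbound [k, j] [i] (by norm_num) (by norm_num) (s • y) hmem η hη1 hη2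
    have e0 : |y 0 * pz 0 (pe k (pe j φ)) (s • y) η| ≤ nrm3 y * 1 := by
      rw [abs_mul, hswap 0]
      exact mul_le_mul (abs_coord3_le y 0) (hb 0) (abs_nonneg _) (nrm3_nonneg y)
    have e1 : |y 1 * pz 1 (pe k (pe j φ)) (s • y) η| ≤ nrm3 y * 1 := by
      rw [abs_mul, hswap 1]
      exact mul_le_mul (abs_coord3_le y 1) (hb 1) (abs_nonneg _) (nrm3_nonneg y)
    have e2 : |y 2 * pz 2 (pe k (pe j φ)) (s • y) η| ≤ nrm3 y * 1 := by
      rw [abs_mul, hswap 2]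
      exact mul_le_mul (abs_coord3_le y 2) (hb 2) (abs_nonneg _) (nrm3_nonneg y)
    rw [Real.norm_eq_abs, hf']
    calc |y 0 * pz 0 (pe k (pe j φ)) (s • y) η + y 1 * pz 1 (pe k (pe j φ)) (s • y) η
          + y 2 * pz 2 (pe k (pe j φ)) (s • y) η|
        ≤ |y 0 * pz 0 (pe k (pe j φ)) (s • y) η + y 1 * pz 1 (pe k (pe j φ)) (s • y) η|
          + |y 2 * pz 2 (pe k (pe j φ)) (s • y) η| := abs_add_le _ _
      _ ≤ |y 0 * pz 0 (pe k (pe j φ)) (s • y) η| + |y 1 * pz 1 (pe k (pe j φ)) (s • y) η|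
          + |y 2 * pz 2 (pe k (pe j φ)) (s • y) η| := by
          linarith [abs_add_le (y 0 * pz 0 (pe k (pe j φ)) (s • y) η)
            (y 1 * pz 1 (pe k (pe j φ)) (s • y) η)]
      _ ≤ 3 * nrm3 y := by linarith
  have hmvt := norm_image_sub_le_of_norm_deriv_le_segment' hderiv hbd 1
    ⟨zero_le_one, le_refl 1⟩
  simp only [Real.norm_eq_abs, one_smul, zero_smul] at hmvt
  rw [pe_pe_zero φ hzero j k η] at hmvt
  simpa using hmvt

end Statement11Aux

set_option maxHeartbeats 1000000 in
/-- Lemma 4.3: assume `B_R` is centered at the origin and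
`φ(0,0,η) = 0` for all `η`.  Fix `(x,t) ∈ B_R`, a dyadic `σ ∈ [R^{-1/2},1]` and an
arc `τ` of aperture `σ^{-1}R^{-1/2}` with center `c`.  Then for any two
`R^{-1/2}`-caps `θ₁, θ₂ ⊂ τ`, `u^λ_{θ₁}(x,t) − u^λ_{θ₂}(x,t) ∈ 4V_τ`, i.e.
`|⟨u^λ_{θ₁}−u^λ_{θ₂}, τ⟩| ≲ σ^{-2}` and `|⟨u^λ_{θ₁}−u^λ_{θ₂}, τ^⊥⟩| ≲ σ^{-1}R^{1/2}`. -/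
theorem u_difference_in_plank :
    ∃ C : ℝ, 0 < C ∧
      ∀ φ : R3 → R2 → ℝ, SmoothPhase φ → HomogOne φ →
        (∀ (α : List (Fin 2)) (β : List (Fin 3)), α.length ≤ 100 → β.length ≤ 100 →
          ∀ z ∈ ball3 0 1, ∀ η : R2, 1 / 2 ≤ nrm2 η → nrm2 η ≤ 2 →
            |peList α (pzList β φ) z η| ≤ 1) →
        (∀ η : R2, φ 0 η = 0) →
      ∀ lam R : ℝ, 1 ≤ R → R ≤ lam →
      ∀ (Xlam : R2 → R2 → ℝ → R2) (Ulam : R2 → R3 → R2),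
        (∀ θ : R2, nrm2 θ = 1 → ∀ (u : R2) (t : ℝ),
            gradη (philam φ lam) (vec3 (Xlam θ u t) t) θ = u) →
        (∀ θ : R2, nrm2 θ = 1 → ∀ z : R3, vec3 (Xlam θ (Ulam θ z) (z 2)) (z 2) = z) →
        (∀ θ : R2, nrm2 θ = 1 → ContDiff ℝ (⊤ : ℕ∞) (Ulam θ)) →
      ∀ z : R3, z ∈ ball3 0 R →
      ∀ σ : ℝ, R ^ (-(1 : ℝ) / 2) ≤ σ → σ ≤ 1 →
      ∀ c : R2, nrm2 c = 1 →
      ∀ θ1 θ2 : R2, nrm2 θ1 = 1 → nrm2 θ2 = 1 →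
        nrm2 (θ1 - c) ≤ σ⁻¹ * R ^ (-(1 : ℝ) / 2) →
        nrm2 (θ2 - c) ≤ σ⁻¹ * R ^ (-(1 : ℝ) / 2) →
        |dot2 (Ulam θ1 z - Ulam θ2 z) c| ≤ C * σ⁻¹ ^ 2 ∧
        |dot2 (Ulam θ1 z - Ulam θ2 z) (perp c)| ≤ C * σ⁻¹ * Real.sqrt R := by
  refine ⟨100, by norm_num, ?_⟩
  intro φ hsm hhom hbound hzero lam R hR hRlam Xlam Ulam hX hU _ z hz σ hσl hσh c hc
    θ1 θ2 hθ1 hθ2 hτ1 hτ2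
  have hsm' : ContDiffOn ℝ (⊤ : ℕ∞) (JJ φ) Udom := hsm
  have hRpos : (0:ℝ) < R := lt_of_lt_of_le one_pos hR
  have hlampos : (0:ℝ) < lam := lt_of_lt_of_le hRpos hRlam
  set ρ : ℝ := R ^ (-(1:ℝ)/2) with hρdef
  have hρpos : 0 < ρ := Real.rpow_pos_of_pos hRpos _
  have hσpos : 0 < σ := lt_of_lt_of_le hρpos hσl
  set δ : ℝ := σ⁻¹ * ρ with hδdef
  have hδpos : 0 < δ := mul_pos (inv_pos.2 hσpos) hρpos
  have hδ1 : δ ≤ 1 := by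
    have h1 : σ⁻¹ ≤ ρ⁻¹ := inv_anti₀ hρpos hσl
    calc δ = σ⁻¹ * ρ := hδdef
      _ ≤ ρ⁻¹ * ρ := mul_le_mul_of_nonneg_right h1 hρpos.le
      _ = 1 := inv_mul_cancel₀ hρpos.ne'
  have hρρR : ρ * (ρ * R) = 1 := by
    rw [hρdef]
    have h2 : R ^ (-(1:ℝ)/2) * R ^ (-(1:ℝ)/2) = R ^ (-1 : ℝ) := by
      rw [← Real.rpow_add hRpos]; norm_num
    calc R ^ (-(1:ℝ)/2) * (R ^ (-(1:ℝ)/2) * R)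
        = (R ^ (-(1:ℝ)/2) * R ^ (-(1:ℝ)/2)) * R := by ring
      _ = R ^ (-1 : ℝ) * R := by rw [h2]
      _ = 1 := by rw [Real.rpow_neg_one]; field_simp
  have hρR : ρ * R = Real.sqrt R := by
    rw [hρdef, Real.sqrt_eq_rpow]
    calc R ^ (-(1:ℝ)/2) * R = R ^ (-(1:ℝ)/2) * R ^ (1:ℝ) := by rw [Real.rpow_one]
      _ = R ^ (-(1:ℝ)/2 + 1) := (Real.rpow_add hRpos _ _).symm
      _ = R ^ ((1:ℝ)/2) := by norm_num
  have hne_of_unit : ∀ θ : R2, nrm2 θ = 1 → θ ≠ 0 := by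
    intro θ h h0
    rw [h0] at h
    norm_num [nrm2, dot2] at h
  have hθ1ne := hne_of_unit θ1 hθ1
  have hθ2ne := hne_of_unit θ2 hθ2
  -- cap geometry
  have hd11 : dot2 θ1 θ1 = 1 := by rw [← nrm2_sq, hθ1]; norm_num
  have hd22 : dot2 θ2 θ2 = 1 := by rw [← nrm2_sq, hθ2]; norm_num
  have hdcc : dot2 c c = 1 := by rw [← nrm2_sq, hc]; norm_num
  have hA : dot2 (θ1 - c) (θ1 - c) ≤ δ ^ 2 := sq_le_of_nrm2_le hτ1
  have hB : dot2 (θ2 - c) (θ2 - c) ≤ δ ^ 2 := sq_le_of_nrm2_le hτ2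
  have hABcross : |dot2 (θ2 - c) (θ1 - c)| ≤ δ ^ 2 := by
    refine le_trans (abs_dot2_le _ _) ?_
    calc nrm2 (θ2 - c) * nrm2 (θ1 - c) ≤ δ * δ :=
          mul_le_mul hτ2 hτ1 (nrm2_nonneg _) hδpos.le
      _ = δ ^ 2 := (sq δ).symm
  set d : R2 := θ1 - θ2 with hddef
  have hdd : dot2 d d ≤ 4 * δ ^ 2 := by
    have hexp : dot2 d d = dot2 (θ1 - c) (θ1 - c) - 2 * dot2 (θ2 - c) (θ1 - c)
        + dot2 (θ2 - c) (θ2 - c) := by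
      simp only [hddef, dot2, Pi.sub_apply]; ring
    have h := abs_le.1 hABcross
    linarith
  have hdcoord : ∀ j : Fin 2, |d j| ≤ 2 * δ := by
    intro j
    refine le_trans (abs_coord2_le _ j) (nrm2_le_of_sq_le (by positivity) ?_)
    calc dot2 d d ≤ 4 * δ ^ 2 := hdd
      _ = (2 * δ) ^ 2 := by ring
  have hcη : ∀ t ∈ Icc (0:ℝ) 1,
      dot2 (c - (θ2 + t • d)) (c - (θ2 + t • d)) ≤ δ ^ 2 := by
    intro t ht
    have hexp : dot2 (c - (θ2 + t • d)) (c - (θ2 + t • d))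
        = (1 - t) ^ 2 * dot2 (θ2 - c) (θ2 - c)
          + 2 * (t * (1 - t)) * dot2 (θ2 - c) (θ1 - c)
          + t ^ 2 * dot2 (θ1 - c) (θ1 - c) := by
      simp only [hddef, dot2, Pi.sub_apply, Pi.add_apply, Pi.smul_apply, smul_eq_mul]
      ring
    have hX1 := (abs_le.1 hABcross).2
    have h1 : 0 ≤ t * (1 - t) := mul_nonneg ht.1 (by linarith [ht.2])
    nlinarith [mul_le_mul_of_nonneg_left hB (sq_nonneg (1 - t)),
      mul_le_mul_of_nonneg_left hA (sq_nonneg t),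
      mul_le_mul_of_nonneg_left hX1 h1]
  have hcηcoord : ∀ t ∈ Icc (0:ℝ) 1, ∀ j : Fin 2, |(c - (θ2 + t • d)) j| ≤ δ :=
    fun t ht j => le_trans (abs_coord2_le _ j) (nrm2_le_of_sq_le hδpos.le (hcη t ht))
  have hηc_lower : ∀ t ∈ Icc (0:ℝ) 1, 1/2 ≤ dot2 (θ2 + t • d) c := by
    intro t ht
    have e1 : dot2 (θ1 - c) (θ1 - c) = 2 - 2 * dot2 θ1 c := by
      have h : dot2 (θ1 - c) (θ1 - c) = dot2 θ1 θ1 - 2 * dot2 θ1 c + dot2 c c := by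
        simp only [dot2, Pi.sub_apply]; ring
      rw [hd11, hdcc] at h; linarith
    have e2 : dot2 (θ2 - c) (θ2 - c) = 2 - 2 * dot2 θ2 c := by
      have h : dot2 (θ2 - c) (θ2 - c) = dot2 θ2 θ2 - 2 * dot2 θ2 c + dot2 c c := by
        simp only [dot2, Pi.sub_apply]; ring
      rw [hd22, hdcc] at h; linarith
    have hexp : dot2 (θ2 + t • d) c = (1 - t) * dot2 θ2 c + t * dot2 θ1 c := by
      simp only [hddef, dot2, Pi.add_apply, Pi.smul_apply, Pi.sub_apply, smul_eq_mul]
      ring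
    have hδsq : δ ^ 2 ≤ 1 := by nlinarith [hδ1, hδpos.le]
    have h1c : 1/2 ≤ dot2 θ1 c := by linarith
    have h2c : 1/2 ≤ dot2 θ2 c := by linarith
    rw [hexp]
    linarith [mul_le_mul_of_nonneg_left h1c ht.1,
      mul_le_mul_of_nonneg_left h2c (by linarith [ht.2] : (0:ℝ) ≤ 1 - t)]
  have hηt_ne : ∀ t ∈ Icc (0:ℝ) 1, θ2 + t • d ≠ 0 := by
    intro t ht h0
    have h := hηc_lower t ht
    rw [h0] at h
    norm_num [dot2] at h
  have hηt_low : ∀ t ∈ Icc (0:ℝ) 1, 1/2 ≤ nrm2 (θ2 + t • d) := by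
    intro t ht
    refine le_trans (hηc_lower t ht) ?_
    refine le_trans (le_abs_self _) (le_trans (abs_dot2_le _ _) ?_)
    rw [hc, mul_one]
  have hηt_hi : ∀ t ∈ Icc (0:ℝ) 1, nrm2 (θ2 + t • d) ≤ 2 := by
    intro t ht
    refine nrm2_le_of_sq_le (by norm_num) ?_
    have hexp : dot2 (θ2 + t • d) (θ2 + t • d)
        = dot2 c c - 2 * dot2 (c - (θ2 + t • d)) c
          + dot2 (c - (θ2 + t • d)) (c - (θ2 + t • d)) := by
      simp only [dot2, Pi.add_apply, Pi.sub_apply, Pi.smul_apply, smul_eq_mul]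
      ring
    have hXc : |dot2 (c - (θ2 + t • d)) c| ≤ δ := by
      refine le_trans (abs_dot2_le _ _) ?_
      rw [hc, mul_one]
      exact nrm2_le_of_sq_le hδpos.le (hcη t ht)
    have h := abs_le.1 hXc
    have h2 := hcη t ht
    rw [hexp, hdcc]
    nlinarith
  -- the rescaled point
  set w : R3 := lam⁻¹ • z with hwdef
  have hzR : nrm3 z ≤ R := by simpa [ball3, sub_zero] using hz
  have hwR : nrm3 w ≤ lam⁻¹ * R := by
    rw [hwdef, nrm3_smul, abs_of_nonneg (inv_nonneg.2 hlampos.le)]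
    exact mul_le_mul_of_nonneg_left hzR (inv_nonneg.2 hlampos.le)
  have hw1 : nrm3 w ≤ 1 := by
    refine le_trans hwR ?_
    have h := mul_le_mul_of_nonneg_left hRlam (inv_nonneg.2 hlampos.le)
    rwa [inv_mul_cancel₀ hlampos.ne'] at h
  have hlamw : lam * nrm3 w ≤ R := by
    have h := mul_le_mul_of_nonneg_left hwR hlampos.le
    rwa [← mul_assoc, mul_inv_cancel₀ hlampos.ne', one_mul] at h
  -- u = ∇_η φ^λ
  have hUval : ∀ θ : R2, nrm2 θ = 1 → Ulam θ z = gradη (philam φ lam) z θ := by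
    intro θ hθ
    have h1 := hX θ hθ (Ulam θ z) (z 2)
    rw [hU θ hθ z] at h1
    exact h1.symm
  have hpelam : ∀ (j : Fin 2) (η : R2), η ≠ 0 →
      pe j (philam φ lam) z η = lam * pe j φ w η := by
    intro j η hη
    have hdiff : DifferentiableAt ℝ (fun ξ => φ w ξ) η := diffAt_slice_eta hsm' w hη
    have hfn : (fun ξ => philam φ lam z ξ) = fun ξ => lam * φ w ξ := by
      funext ξ; simp only [philam, hwdef]
    simp only [pe, hfn]
    rw [fderiv_const_mul hdiff lam]
    simp [smul_eq_mul]
  have hsub : ∀ v : R2, dot2 (Ulam θ1 z - Ulam θ2 z) v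
      = lam * ((v 0 * pe 0 φ w θ1 + v 1 * pe 1 φ w θ1)
          - (v 0 * pe 0 φ w θ2 + v 1 * pe 1 φ w θ2)) := by
    intro v
    rw [hUval θ1 hθ1, hUval θ2 hθ2]
    simp only [dot2, Pi.sub_apply, gradη, Matrix.cons_val_zero, Matrix.cons_val_one,
      Matrix.head_cons]
    rw [hpelam 0 θ1 hθ1ne, hpelam 1 θ1 hθ1ne, hpelam 0 θ2 hθ2ne, hpelam 1 θ2 hθ2ne]
    ring
  have hθ2d1 : θ2 + (1:ℝ) • d = θ1 := by rw [one_smul, hddef]; abel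
  have hθ2d0 : θ2 + (0:ℝ) • d = θ2 := by rw [zero_smul, add_zero]
  have hkeysmall : ∀ (k j : Fin 2), ∀ t ∈ Icc (0:ℝ) 1,
      |pe k (pe j φ) w (θ2 + t • d)| ≤ 3 * nrm3 w :=
    fun k j t ht => key_small hsm' hzero hbound j k w hw1 (hηt_low t ht) (hηt_hi t ht)
  -- generic mean value step
  have hMVT : ∀ v : R2, ∀ K : ℝ, 0 ≤ K →
      (∀ t ∈ Icc (0:ℝ) 1, ∀ k : Fin 2,
        |v 0 * pe k (pe 0 φ) w (θ2 + t • d) + v 1 * pe k (pe 1 φ) w (θ2 + t • d)| ≤ K) →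
      |(v 0 * pe 0 φ w θ1 + v 1 * pe 1 φ w θ1)
        - (v 0 * pe 0 φ w θ2 + v 1 * pe 1 φ w θ2)| ≤ 4 * δ * K := by
    intro v K hK hinner
    set F : ℝ → ℝ := fun s =>
      v 0 * pe 0 φ w (θ2 + s • d) + v 1 * pe 1 φ w (θ2 + s • d) with hF
    set D : ℝ → ℝ := fun t =>
      v 0 * (d 0 * pe 0 (pe 0 φ) w (θ2 + t • d) + d 1 * pe 1 (pe 0 φ) w (θ2 + t • d))
      + v 1 * (d 0 * pe 0 (pe 1 φ) w (θ2 + t • d) + d 1 * pe 1 (pe 1 φ) w (θ2 + t • d))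
      with hD
    have hderiv : ∀ t ∈ Icc (0:ℝ) 1, HasDerivWithinAt F (D t) (Icc 0 1) t := by
      intro t ht
      apply HasDerivAt.hasDerivWithinAt
      have h0 := pe_line_hasDerivAt (smooth_pe hsm' 0) w θ2 d (hηt_ne t ht)
      have h1 := pe_line_hasDerivAt (smooth_pe hsm' 1) w θ2 d (hηt_ne t ht)
      exact (h0.const_mul (v 0)).add (h1.const_mul (v 1))
    have hb : ∀ t ∈ Ico (0:ℝ) 1, ‖D t‖ ≤ (4 * δ) * K := by
      intro t ht
      have ht' : t ∈ Icc (0:ℝ) 1 := ⟨ht.1, ht.2.le⟩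
      have i0 := hinner t ht' 0
      have i1 := hinner t ht' 1
      have hd0 := hdcoord 0
      have hd1 := hdcoord 1
      simp only [Real.norm_eq_abs, hD]
      have hre : v 0 * (d 0 * pe 0 (pe 0 φ) w (θ2 + t • d)
            + d 1 * pe 1 (pe 0 φ) w (θ2 + t • d))
          + v 1 * (d 0 * pe 0 (pe 1 φ) w (θ2 + t • d)
            + d 1 * pe 1 (pe 1 φ) w (θ2 + t • d))
          = d 0 * (v 0 * pe 0 (pe 0 φ) w (θ2 + t • d) + v 1 * pe 0 (pe 1 φ) w (θ2 + t • d))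
          + d 1 * (v 0 * pe 1 (pe 0 φ) w (θ2 + t • d)
            + v 1 * pe 1 (pe 1 φ) w (θ2 + t • d)) := by ring
      rw [hre]
      refine le_trans (abs_add_le _ _) ?_
      rw [abs_mul, abs_mul]
      nlinarith [mul_le_mul hd0 i0 (abs_nonneg _) (by positivity : (0:ℝ) ≤ 2 * δ),
        mul_le_mul hd1 i1 (abs_nonneg _) (by positivity : (0:ℝ) ≤ 2 * δ)]
    have hmvt := norm_image_sub_le_of_norm_deriv_le_segment' hderiv hb 1
      ⟨zero_le_one, le_refl 1⟩
    have hF1 : F 1 = v 0 * pe 0 φ w θ1 + v 1 * pe 1 φ w θ1 := by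
      simp only [hF, hθ2d1]
    have hF0 : F 0 = v 0 * pe 0 φ w θ2 + v 1 * pe 1 φ w θ2 := by
      simp only [hF, hθ2d0]
    rw [Real.norm_eq_abs, hF1, hF0] at hmvt
    calc |(v 0 * pe 0 φ w θ1 + v 1 * pe 1 φ w θ1)
          - (v 0 * pe 0 φ w θ2 + v 1 * pe 1 φ w θ2)| ≤ (4 * δ) * K * (1 - 0) := hmvt
      _ = 4 * δ * K := by ring
  -- tangential inner bound via symmetry and Euler
  have hinner_c : ∀ t ∈ Icc (0:ℝ) 1, ∀ k : Fin 2,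
      |c 0 * pe k (pe 0 φ) w (θ2 + t • d) + c 1 * pe k (pe 1 φ) w (θ2 + t • d)|
        ≤ 6 * δ * nrm3 w := by
    intro t ht k
    have hne := hηt_ne t ht
    have hswap0 : pe k (pe 0 φ) w (θ2 + t • d) = pe 0 (pe k φ) w (θ2 + t • d) :=
      pe_pe_swap hsm' k 0 hne w
    have hswap1 : pe k (pe 1 φ) w (θ2 + t • d) = pe 1 (pe k φ) w (θ2 + t • d) :=
      pe_pe_swap hsm' k 1 hne w
    have heuler : (θ2 + t • d) 0 * pe 0 (pe k φ) w (θ2 + t • d)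
        + (θ2 + t • d) 1 * pe 1 (pe k φ) w (θ2 + t • d) = 0 :=
      euler_pe (smooth_pe hsm' k)
        (fun z' ξ hξ a ha => pe_homog0 hsm' hhom k z' hξ ha) w hne
    have b0 := hkeysmall 0 k t ht
    have b1 := hkeysmall 1 k t ht
    have c0 := hcηcoord t ht 0
    have c1 := hcηcoord t ht 1
    simp only [Pi.sub_apply] at c0 c1
    rw [hswap0, hswap1]
    have hre : c 0 * pe 0 (pe k φ) w (θ2 + t • d) + c 1 * pe 1 (pe k φ) w (θ2 + t • d)
        = (c 0 - (θ2 + t • d) 0) * pe 0 (pe k φ) w (θ2 + t • d)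
          + (c 1 - (θ2 + t • d) 1) * pe 1 (pe k φ) w (θ2 + t • d) := by
      linear_combination heuler
    rw [hre]
    refine le_trans (abs_add_le _ _) ?_
    rw [abs_mul, abs_mul]
    nlinarith [mul_le_mul c0 b0 (abs_nonneg _) hδpos.le,
      mul_le_mul c1 b1 (abs_nonneg _) hδpos.le, nrm3_nonneg w]
  -- perpendicular inner bound
  have hperpcoord : ∀ j : Fin 2, |perp c j| ≤ 1 := by
    have h0 := abs_coord2_le c 0
    have h1 := abs_coord2_le c 1
    rw [hc] at h0 h1
    intro j
    have hj : j = 0 ∨ j = 1 := by omega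
    rcases hj with h | h <;> subst h
    · simpa [perp] using h1
    · simpa [perp] using h0
  have hinner_p : ∀ t ∈ Icc (0:ℝ) 1, ∀ k : Fin 2,
      |perp c 0 * pe k (pe 0 φ) w (θ2 + t • d) + perp c 1 * pe k (pe 1 φ) w (θ2 + t • d)|
        ≤ 6 * nrm3 w := by
    intro t ht k
    have b0 := hkeysmall k 0 t ht
    have b1 := hkeysmall k 1 t ht
    refine le_trans (abs_add_le _ _) ?_
    rw [abs_mul, abs_mul]
    nlinarith [mul_le_mul (hperpcoord 0) b0 (abs_nonneg _) zero_le_one,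
      mul_le_mul (hperpcoord 1) b1 (abs_nonneg _) zero_le_one, nrm3_nonneg w]
  constructor
  · -- tangential estimate
    rw [hsub c, abs_mul, abs_of_pos hlampos]
    have h1 := hMVT c (6 * δ * nrm3 w)
      (mul_nonneg (mul_nonneg (by norm_num) hδpos.le) (nrm3_nonneg w)) hinner_c
    have h2 := mul_le_mul_of_nonneg_left h1 hlampos.le
    refine le_trans h2 ?_
    have h3 : lam * (4 * δ * (6 * δ * nrm3 w)) = 24 * δ ^ 2 * (lam * nrm3 w) := by ring
    rw [h3]
    have h5 : 24 * δ ^ 2 * (lam * nrm3 w) ≤ 24 * δ ^ 2 * R :=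
      mul_le_mul_of_nonneg_left hlamw (by positivity)
    refine le_trans h5 ?_
    have h6 : δ ^ 2 * R = σ⁻¹ ^ 2 := by
      calc δ ^ 2 * R = σ⁻¹ ^ 2 * (ρ * (ρ * R)) := by rw [hδdef]; ring
        _ = σ⁻¹ ^ 2 := by rw [hρρR, mul_one]
    calc 24 * δ ^ 2 * R = 24 * (δ ^ 2 * R) := by ring
      _ = 24 * σ⁻¹ ^ 2 := by rw [h6]
      _ ≤ 100 * σ⁻¹ ^ 2 := by nlinarith [sq_nonneg σ⁻¹]
  · -- perpendicular estimate
    rw [hsub (perp c), abs_mul, abs_of_pos hlampos]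
    have h1 := hMVT (perp c) (6 * nrm3 w) (mul_nonneg (by norm_num) (nrm3_nonneg w)) hinner_p
    have h2 := mul_le_mul_of_nonneg_left h1 hlampos.le
    refine le_trans h2 ?_
    have h3 : lam * (4 * δ * (6 * nrm3 w)) = 24 * δ * (lam * nrm3 w) := by ring
    rw [h3]
    have h5 : 24 * δ * (lam * nrm3 w) ≤ 24 * δ * R :=
      mul_le_mul_of_nonneg_left hlamw (by positivity)
    refine le_trans h5 ?_
    have h6 : δ * R = σ⁻¹ * Real.sqrt R := by
      calc δ * R = σ⁻¹ * (ρ * R) := by rw [hδdef]; ring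
        _ = σ⁻¹ * Real.sqrt R := by rw [hρR]
    calc 24 * δ * R = 24 * (δ * R) := by ring
      _ = 24 * (σ⁻¹ * Real.sqrt R) := by rw [h6]
      _ ≤ 100 * σ⁻¹ * Real.sqrt R := by
          nlinarith [mul_nonneg (inv_nonneg.2 hσpos.le) (Real.sqrt_nonneg R)]


end FIO
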